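/- Fix f1, f2 ∈ ℂ and set k = f1 + f2 - f1·f2 and U = (1 + k)/2. For every triangle in the Poncelet family with caustic foci f1, f2 (pairwise distinct unit-modulus a, b, c with s1 = f1 + f2 + conj(f1·f2)·s3 and s2 = f1·f2 + conj(f1 + f2)·s3), let V be the orthogonal projection of F = 1 onto the Simson line of F, and let C = 2V - 1 be the reflection of F about V (equivalently, the projection of F onto the directrix of the inscribed parabola with focus F). Then |C - U| = |1 - k|/2. In other words, over the Poncelet family C moves along a fixed circle centered at U whose radius is twice the radius of the circle traced by V, and U is the point of the V-circle antipodal to F. -/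

import Mathlib

open Complex ComplexConjugate

private lemma proj_eq_of {s : AffineSubspace ℝ ℂ} [Nonempty s]
    [s.direction.HasOrthogonalProjection] {p v : ℂ}
    (hv : v ∈ s) (ho : v - p ∈ s.directionᗮ) :
    (EuclideanGeometry.orthogonalProjection s p : ℂ) = v := by
  have h := EuclideanGeometry.inter_eq_singleton_orthogonalProjection (s := s) p
  have hv2 : v ∈ (s : Set ℂ) ∩ (AffineSubspace.mk' p s.directionᗮ : Set ℂ) := by
    refine ⟨hv, AffineSubspace.mem_mk'.2 ?_⟩
    simpa [vsub_eq_sub] using ho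
  rw [h] at hv2
  exact (Set.mem_singleton_iff.1 hv2).symm

private lemma re_eq_zero_of (z : ℂ) (h : z + conj z = 0) : z.re = 0 := by
  have := congrArg Complex.re h
  simp [Complex.add_re, Complex.conj_re] at this
  linarith

private lemma conj_eq_inv {a : ℂ} (ha : ‖a‖ = 1) : conj a = a⁻¹ := by
  have ha0 : a ≠ 0 := by intro h; rw [h] at ha; simp at ha
  have h1 : a * conj a = 1 := by
    rw [Complex.mul_conj]
    norm_cast
    simp [Complex.normSq_eq_norm_sq, ha]
  exact eq_inv_of_mul_eq_one_left (by rw [mul_comm]; exact h1)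

set_option maxHeartbeats 1600000 in
/-- Over the Poncelet family of triangles inscribed in the unit circle with caustic
foci `f1`, `f2`, set `k = f1 + f2 - f1·f2` and `U = (1 + k)/2`. Let `V` be the
orthogonal projection of `F = 1` onto the Simson line of `F`, and `C = 2V - 1` the
reflection of `F` about `V` (the projection of `F` onto the directrix of the inscribed
parabola with focus `F`). Then `|C - U| = |1 - k|/2`: over the family, `C` moves along
a fixed circle centered at `U` of radius twice that of the circle traced by `V`. -/
theorem directrix_projection_locus_is_circle (f1 f2 a b c : ℂ)
    (hab : a ≠ b) (hbc : b ≠ c) (hac : a ≠ c)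
    (ha : ‖a‖ = 1) (hb : ‖b‖ = 1) (hc : ‖c‖ = 1)
    (hs1 : a + b + c = f1 + f2 + conj (f1 * f2) * (a * b * c))
    (hs2 : a * b + b * c + c * a = f1 * f2 + conj (f1 + f2) * (a * b * c)) :
    ‖((2 * (EuclideanGeometry.orthogonalProjection
              (affineSpan ℝ ({(1 + a + b - a * b) / 2,
                              (1 + b + c - b * c) / 2,
                              (1 + c + a - c * a) / 2} : Set ℂ)) 1 : ℂ) - 1)
        - (1 + (f1 + f2 - f1 * f2)) / 2)‖ =
      ‖1 - (f1 + f2 - f1 * f2)‖ / 2 := by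
  have ha0 : a ≠ 0 := by intro h; rw [h] at ha; simp at ha
  have hb0 : b ≠ 0 := by intro h; rw [h] at hb; simp at hb
  have hc0 : c ≠ 0 := by intro h; rw [h] at hc; simp at hc
  have hca : conj a = a⁻¹ := conj_eq_inv ha
  have hcb : conj b = b⁻¹ := conj_eq_inv hb
  have hcc : conj c = c⁻¹ := conj_eq_inv hc
  have Ha : a * conj a = 1 := by rw [hca]; field_simp
  have Hb : b * conj b = 1 := by rw [hcb]; field_simp
  have Hc : c * conj c = 1 := by rw [hcc]; field_simp
  have hac' : a - c ≠ 0 := sub_ne_zero.2 hac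
  set P1 : ℂ := (1 + a + b - a * b) / 2 with hP1
  set P2 : ℂ := (1 + b + c - b * c) / 2 with hP2
  set P3 : ℂ := (1 + c + a - c * a) / 2 with hP3
  set S : Set ℂ := {P1, P2, P3} with hS
  set V : ℂ := 1 - (1 - a) * (1 - b) * (1 - c) / 4 with hV
  -- the projection equals V
  have hproj : (EuclideanGeometry.orthogonalProjection (affineSpan ℝ S) 1 : ℂ) = V := by
    apply proj_eq_of
    · -- membership: V = lineMap P1 P2 r for a real r
      set t : ℂ := (1 - a) * (1 + c) / (2 * (a - c)) with ht
      have hca2 : c - a ≠ 0 := sub_ne_zero.2 (Ne.symm hac)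
      have htre : (t.re : ℂ) = t := by
        apply Complex.conj_eq_iff_re.1
        rw [ht]
        simp only [map_div₀, map_mul, map_sub, map_add, map_one, map_ofNat, hca, hcc]
        field_simp
        ring
      have hVline : V = AffineMap.lineMap P1 P2 (-t.re) := by
        rw [AffineMap.lineMap_apply]
        simp only [vsub_eq_sub, vadd_eq_add, Complex.real_smul]
        push_cast
        rw [htre]
        rw [hV, hP1, hP2, ht]
        field_simp
        ring
      rw [hVline]
      exact affineSpan_mono ℝ (by intro x hx; simp [hS] at hx ⊢; tauto)
        (AffineMap.lineMap_mem_affineSpan_pair _ _ _)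
    · -- orthogonality
      rw [direction_affineSpan, vectorSpan_def, Submodule.mem_orthogonal]
      intro u hu
      induction hu using Submodule.span_induction with
      | mem x hx =>
        obtain ⟨x1, hx1, x2, hx2, rfl⟩ := hx
        have key : ∀ y z : ℂ, y ∈ S → z ∈ S →
            (inner (𝕜 := ℝ) (y - z) (V - 1) : ℝ) = 0 := by
          intro y z hy hz
          rw [hS, Set.mem_insert_iff, Set.mem_insert_iff, Set.mem_singleton_iff] at hy hz
          rw [Complex.inner]
          apply re_eq_zero_of
          rcases hy with rfl | rfl | rfl <;> rcases hz with rfl | rfl | rfl <;>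
            simp only [hV, hP1, hP2, hP3, map_div₀, map_mul, map_sub, map_add,
              map_one, map_ofNat, Complex.conj_conj]
          · ring
          · linear_combination ((1/4: ℂ) + (-1/8: ℂ)*(conj c) + (-1/4: ℂ)*(conj b) + (1/8: ℂ)*(conj b)*(conj c) + (-1/8: ℂ)*c + (1/8: ℂ)*c*(conj b) + (-1/4: ℂ)*b + (1/8: ℂ)*b*(conj c) + (1/4: ℂ)*b*(conj b) + (-1/8: ℂ)*b*(conj b)*(conj c) + (1/8: ℂ)*b*c + (-1/8: ℂ)*b*c*(conj b)) * Ha + ((1/4: ℂ) + (-1/8: ℂ)*(conj a) + (-1/4: ℂ)*c*(conj c) + (1/8: ℂ)*c*(conj a)*(conj c) + (-1/8: ℂ)*a + (1/8: ℂ)*a*c*(conj c)) * Hb + ((-1/2: ℂ) + (1/4: ℂ)*(conj b) + (1/4: ℂ)*(conj a) + (-1/8: ℂ)*(conj a)*(conj b) + (1/4: ℂ)*b + (-1/8: ℂ)*b*(conj a) + (1/4: ℂ)*a + (-1/8: ℂ)*a*(conj b) + (-1/8: ℂ)*a*b) * Hc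
          · linear_combination ((1/8: ℂ)*(conj c) + (-1/8: ℂ)*(conj b) + (1/8: ℂ)*c + (-1/4: ℂ)*c*(conj c) + (1/8: ℂ)*c*(conj b)*(conj c) + (-1/8: ℂ)*b + (1/4: ℂ)*b*(conj b) + (-1/8: ℂ)*b*(conj b)*(conj c) + (1/8: ℂ)*b*c*(conj c) + (-1/8: ℂ)*b*c*(conj b)) * Ha + ((1/2: ℂ) + (-1/4: ℂ)*(conj c) + (-1/4: ℂ)*(conj a) + (1/8: ℂ)*(conj a)*(conj c) + (-1/4: ℂ)*c + (1/8: ℂ)*c*(conj a) + (-1/4: ℂ)*a + (1/8: ℂ)*a*(conj c) + (1/8: ℂ)*a*c) * Hb + ((-1/2: ℂ) + (1/4: ℂ)*(conj b) + (1/4: ℂ)*(conj a) + (-1/8: ℂ)*(conj a)*(conj b) + (1/4: ℂ)*b + (-1/8: ℂ)*b*(conj a) + (1/4: ℂ)*a + (-1/8: ℂ)*a*(conj b) + (-1/8: ℂ)*a*b) * Hc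
          · linear_combination ((-1/4: ℂ) + (1/8: ℂ)*(conj c) + (1/4: ℂ)*(conj b) + (-1/8: ℂ)*(conj b)*(conj c) + (1/8: ℂ)*c + (-1/8: ℂ)*c*(conj b) + (1/4: ℂ)*b + (-1/8: ℂ)*b*(conj c) + (-1/4: ℂ)*b*(conj b) + (1/8: ℂ)*b*(conj b)*(conj c) + (-1/8: ℂ)*b*c + (1/8: ℂ)*b*c*(conj b)) * Ha + ((-1/4: ℂ) + (1/8: ℂ)*(conj a) + (1/4: ℂ)*c*(conj c) + (-1/8: ℂ)*c*(conj a)*(conj c) + (1/8: ℂ)*a + (-1/8: ℂ)*a*c*(conj c)) * Hb + ((1/2: ℂ) + (-1/4: ℂ)*(conj b) + (-1/4: ℂ)*(conj a) + (1/8: ℂ)*(conj a)*(conj b) + (-1/4: ℂ)*b + (1/8: ℂ)*b*(conj a) + (-1/4: ℂ)*a + (1/8: ℂ)*a*(conj b) + (1/8: ℂ)*a*b) * Hc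
          · ring
          · linear_combination ((-1/4: ℂ) + (1/4: ℂ)*(conj c) + (1/8: ℂ)*(conj b) + (-1/8: ℂ)*(conj b)*(conj c) + (1/4: ℂ)*c + (-1/4: ℂ)*c*(conj c) + (-1/8: ℂ)*c*(conj b) + (1/8: ℂ)*c*(conj b)*(conj c) + (1/8: ℂ)*b + (-1/8: ℂ)*b*(conj c) + (-1/8: ℂ)*b*c + (1/8: ℂ)*b*c*(conj c)) * Ha + ((1/4: ℂ) + (-1/4: ℂ)*(conj c) + (-1/8: ℂ)*(conj a) + (1/8: ℂ)*(conj a)*(conj c) + (-1/4: ℂ)*c + (1/4: ℂ)*c*(conj c) + (1/8: ℂ)*c*(conj a) + (-1/8: ℂ)*c*(conj a)*(conj c) + (-1/8: ℂ)*a + (1/8: ℂ)*a*(conj c) + (1/8: ℂ)*a*c + (-1/8: ℂ)*a*c*(conj c)) * Hb + (0) * Hc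
          · linear_combination ((-1/8: ℂ)*(conj c) + (1/8: ℂ)*(conj b) + (-1/8: ℂ)*c + (1/4: ℂ)*c*(conj c) + (-1/8: ℂ)*c*(conj b)*(conj c) + (1/8: ℂ)*b + (-1/4: ℂ)*b*(conj b) + (1/8: ℂ)*b*(conj b)*(conj c) + (-1/8: ℂ)*b*c*(conj c) + (1/8: ℂ)*b*c*(conj b)) * Ha + ((-1/2: ℂ) + (1/4: ℂ)*(conj c) + (1/4: ℂ)*(conj a) + (-1/8: ℂ)*(conj a)*(conj c) + (1/4: ℂ)*c + (-1/8: ℂ)*c*(conj a) + (1/4: ℂ)*a + (-1/8: ℂ)*a*(conj c) + (-1/8: ℂ)*a*c) * Hb + ((1/2: ℂ) + (-1/4: ℂ)*(conj b) + (-1/4: ℂ)*(conj a) + (1/8: ℂ)*(conj a)*(conj b) + (-1/4: ℂ)*b + (1/8: ℂ)*b*(conj a) + (-1/4: ℂ)*a + (1/8: ℂ)*a*(conj b) + (1/8: ℂ)*a*b) * Hc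
          · linear_combination ((1/4: ℂ) + (-1/4: ℂ)*(conj c) + (-1/8: ℂ)*(conj b) + (1/8: ℂ)*(conj b)*(conj c) + (-1/4: ℂ)*c + (1/4: ℂ)*c*(conj c) + (1/8: ℂ)*c*(conj b) + (-1/8: ℂ)*c*(conj b)*(conj c) + (-1/8: ℂ)*b + (1/8: ℂ)*b*(conj c) + (1/8: ℂ)*b*c + (-1/8: ℂ)*b*c*(conj c)) * Ha + ((-1/4: ℂ) + (1/4: ℂ)*(conj c) + (1/8: ℂ)*(conj a) + (-1/8: ℂ)*(conj a)*(conj c) + (1/4: ℂ)*c + (-1/4: ℂ)*c*(conj c) + (-1/8: ℂ)*c*(conj a) + (1/8: ℂ)*c*(conj a)*(conj c) + (1/8: ℂ)*a + (-1/8: ℂ)*a*(conj c) + (-1/8: ℂ)*a*c + (1/8: ℂ)*a*c*(conj c)) * Hb + (0) * Hc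
          · ring
        simpa [vsub_eq_sub] using key x1 x2 hx1 hx2
      | zero => simp
      | add x y _ _ hx hy => rw [inner_add_left, hx, hy]; ring
      | smul r x _ hx => rw [inner_smul_left, hx]; ring
  rw [hproj]
  -- algebra
  have hmain : 2 * V - 1 - (1 + (f1 + f2 - f1 * f2)) / 2
      = a * b * c * conj (1 - (f1 + f2 - f1 * f2)) / 2 := by
    simp only [map_mul, map_add] at hs1 hs2
    simp only [map_sub, map_add, map_mul, map_one, hV]
    linear_combination hs1 / 2 - hs2 / 2
  rw [hmain, norm_div, norm_mul, Complex.norm_conj, norm_mul, norm_mul, ha, hb, hc,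
    Complex.norm_two]
  ring
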